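/- arXiv:2006.09858 — 3 statements merged into one kernel-verified Lean document; each statement's English description precedes it below -/
import Mathlib

section
/- The ordinal capacity of d-dimensional Euclidean space equals N_d + 1, where N_d is the maximum number of unit vectors in ℝ^d with pairwise inner products at most 1/2 (equivalently, the spherical π/6-cap packing number of S^{d-1}). That is, the maximum N for which there exist N points in ℝ^d that are ordinally dense equals N_d + 1. -/
/-!
Put the distinguished point `x n₀` of an ordinally dense set at the origin. For any two other
points `a, b`, the side `‖a - b‖` is then the longest side of the triangle `0, a, b`, so the angle
at the origin is at least `π / 3` and the directions `a / ‖a‖` form a kissing configuration.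
Conversely, distinct unit vectors at pairwise angle at least `π / 3` are at distance at least `1`
from each other, so together with the origin they form an ordinally dense set.
-/

open RealInnerProductSpace

/-- A point configuration of distinct points is ordinally dense if some point's maximum
distance to the others is at most the minimum pairwise distance among the others. -/
def OrdinallyDense {S : Type*} [MetricSpace S] {N : ℕ} (x : Fin N → S) : Prop :=
  Function.Injective x ∧
  ∃ n₀ : Fin N, ∀ n, n ≠ n₀ → ∀ m k : Fin N, m ≠ n₀ → k ≠ n₀ → m ≠ k →
    dist (x n) (x n₀) ≤ dist (x m) (x k)

section KissingConfiguration

variable {E : Type*} [NormedAddCommGroup E] [InnerProductSpace ℝ E]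

/-- Unit vectors at pairwise angle at least `π / 3`, i.e. the centres of a packing of the unit
sphere by caps of angular radius `π / 6`. -/
def IsKissingConfiguration {n : ℕ} (v : Fin n → E) : Prop :=
  (∀ i, ‖v i‖ = 1) ∧ ∀ i j, i ≠ j → ⟪v i, v j⟫ ≤ (1 : ℝ) / 2

theorem inner_le_half_mul_norm_of_norm_le_norm_sub {a b : E} (ha : ‖a‖ ≤ ‖a - b‖)
    (hb : ‖b‖ ≤ ‖a - b‖) : ⟪a, b⟫ ≤ ‖a‖ * ‖b‖ / 2 := by
  have hsq := norm_sub_sq_real a b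
  have ha2 : ‖a‖ ^ 2 ≤ ‖a - b‖ ^ 2 := pow_le_pow_left₀ (norm_nonneg _) ha 2
  have hb2 : ‖b‖ ^ 2 ≤ ‖a - b‖ ^ 2 := pow_le_pow_left₀ (norm_nonneg _) hb 2
  rcases le_total ‖a‖ ‖b‖ with h | h <;> nlinarith [norm_nonneg a, norm_nonneg b]

theorem isKissingConfiguration_normalize {n : ℕ} {y : Fin n → E} (hy : ∀ i, y i ≠ 0)
    (hdist : ∀ i j, i ≠ j → ‖y i‖ ≤ ‖y i - y j‖) :
    IsKissingConfiguration (fun i => ‖y i‖⁻¹ • y i) := by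
  refine ⟨fun i => by simpa using norm_smul_inv_norm (𝕜 := ℝ) (hy i), fun i j hij => ?_⟩
  have hi := norm_pos_iff.2 (hy i)
  have hj := norm_pos_iff.2 (hy j)
  have hyij : ⟪y i, y j⟫ ≤ ‖y i‖ * ‖y j‖ / 2 :=
    inner_le_half_mul_norm_of_norm_le_norm_sub (hdist i j hij)
      (by rw [norm_sub_rev]; exact hdist j i hij.symm)
  rw [real_inner_smul_left, real_inner_smul_right]
  calc ‖y i‖⁻¹ * (‖y j‖⁻¹ * ⟪y i, y j⟫)
      ≤ ‖y i‖⁻¹ * (‖y j‖⁻¹ * (‖y i‖ * ‖y j‖ / 2)) := by gcongr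
    _ = 1 / 2 := by field_simp

namespace IsKissingConfiguration

variable {n : ℕ} {v : Fin n → E}

theorem one_le_dist (hv : IsKissingConfiguration v) {i j : Fin n} (hij : i ≠ j) :
    1 ≤ dist (v i) (v j) := by
  have hsq := norm_sub_sq_real (v i) (v j)
  rw [hv.1 i, hv.1 j] at hsq
  rw [dist_eq_norm]
  nlinarith [norm_nonneg (v i - v j), hv.2 i j hij]

theorem injective (hv : IsKissingConfiguration v) : Function.Injective v := by
  intro i j hvij
  by_contra hij
  have := hv.one_le_dist hij
  rw [hvij, dist_self] at this
  linarith

theorem ordinallyDense_cons_zero (hv : IsKissingConfiguration v) :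
    OrdinallyDense (Fin.cons 0 v : Fin (n + 1) → E) := by
  refine ⟨Fin.cons_injective_iff.2 ⟨?_, hv.injective⟩, 0, fun p hp q r hq hr hqr => ?_⟩
  · rintro ⟨i, hi⟩
    simpa [hi] using hv.1 i
  obtain ⟨i, rfl⟩ := Fin.exists_succ_eq.2 hp
  obtain ⟨j, rfl⟩ := Fin.exists_succ_eq.2 hq
  obtain ⟨k, rfl⟩ := Fin.exists_succ_eq.2 hr
  simp only [Fin.cons_succ, Fin.cons_zero, dist_zero_right, hv.1 i]
  exact hv.one_le_dist fun hjk => hqr (congrArg Fin.succ hjk)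

end IsKissingConfiguration

theorem OrdinallyDense.exists_isKissingConfiguration {M : ℕ} {x : Fin (M + 1) → E}
    (hx : OrdinallyDense x) : ∃ v : Fin M → E, IsKissingConfiguration v := by
  obtain ⟨hinj, n₀, hn₀⟩ := hx
  refine ⟨_, isKissingConfiguration_normalize (y := fun i => x (n₀.succAbove i) - x n₀)
    (fun i => sub_ne_zero.2 (hinj.ne (n₀.succAbove_ne i))) fun i j hij => ?_⟩
  simpa [dist_eq_norm] using hn₀ _ (n₀.succAbove_ne i) _ _ (n₀.succAbove_ne i)
    (n₀.succAbove_ne j) (Fin.succAbove_right_injective.ne hij)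

end KissingConfiguration

theorem ordinal_capacity_euclidean (d Nd : ℕ)
    -- Nd is the spherical π/6-cap packing number: the maximum number of unit vectors
    -- in ℝ^d with pairwise inner products at most 1/2
    (hNd : IsGreatest {n : ℕ | ∃ v : Fin n → EuclideanSpace ℝ (Fin d),
      (∀ i, ‖v i‖ = 1) ∧ ∀ i j, i ≠ j → ⟪v i, v j⟫ ≤ (1 : ℝ) / 2} Nd) :
    IsGreatest {N : ℕ | ∃ x : Fin N → EuclideanSpace ℝ (Fin d), OrdinallyDense x}
      (Nd + 1) := by
  obtain ⟨⟨v, hv⟩, hNd_max⟩ := hNd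
  refine ⟨⟨Fin.cons 0 v, IsKissingConfiguration.ordinallyDense_cons_zero hv⟩, ?_⟩
  rintro (_ | M) ⟨x, hx⟩
  · exact Nat.zero_le _
  · exact Nat.succ_le_succ (hNd_max hx.exists_isKissingConfiguration)
end

section
/- The ordinal capacity of the Euclidean plane ℝ² equals 7: there exist 7 points (a regular hexagon with unit circumradius together with its center) that are ordinally dense, and no 8 points in ℝ² are ordinally dense. -/
open Real Module
open scoped InnerProductSpace

theorem two_inner_le_norm_mul_norm_of_norm_le_norm_sub {F : Type*} [NormedAddCommGroup F]
    [InnerProductSpace ℝ F] {u v : F} (hu : ‖u‖ ≤ ‖u - v‖) (hv : ‖v‖ ≤ ‖u - v‖) :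
    2 * ⟪u, v⟫_ℝ ≤ ‖u‖ * ‖v‖ := by
  have hsub := norm_sub_sq_real u v
  rcases le_total ‖u‖ ‖v‖ with h | h
  · nlinarith [pow_le_pow_left₀ (norm_nonneg v) hv 2, mul_le_mul_of_nonneg_left h (norm_nonneg u)]
  · nlinarith [pow_le_pow_left₀ (norm_nonneg u) hu 2, mul_le_mul_of_nonneg_left h (norm_nonneg v)]

theorem Complex.inner_eq_norm_mul_norm_mul_cos_arg_sub (x y : ℂ) :
    ⟪x, y⟫_ℝ = ‖x‖ * ‖y‖ * Real.cos (arg x - arg y) := by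
  rw [Real.cos_sub, Complex.inner, mul_re, conj_re, conj_im]
  linear_combination (-y.re) * norm_mul_cos_arg x - (‖x‖ * Real.cos (arg x)) * norm_mul_cos_arg y
    - y.im * norm_mul_sin_arg x - (‖x‖ * Real.sin (arg x)) * norm_mul_sin_arg y

theorem exists_ne_abs_sub_lt_of_card_lt {ι : Type*} [Fintype ι] {n : ℕ}
    (hn : n < Fintype.card ι) {a δ : ℝ} (hδ : 0 < δ) {f : ι → ℝ}
    (hf : ∀ i, f i ∈ Set.Ico a (a + n * δ)) : ∃ i j, i ≠ j ∧ |f i - f j| < δ := by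
  have hbin : ∀ i ∈ (Finset.univ : Finset ι), ⌊(f i - a) / δ⌋ ∈ Finset.Ico (0 : ℤ) n := by
    intro i _
    obtain ⟨h₁, h₂⟩ := hf i
    rw [Finset.mem_Ico, Int.floor_nonneg, Int.floor_lt, div_lt_iff₀ hδ]
    exact ⟨div_nonneg (sub_nonneg.2 h₁) hδ.le, by push_cast; linarith⟩
  obtain ⟨i, -, j, -, hij, hfloor⟩ :=
    Finset.exists_ne_map_eq_of_card_lt_of_maps_to (by simpa using hn) hbin
  refine ⟨i, j, hij, ?_⟩
  have := Int.abs_sub_lt_one_of_floor_eq_floor hfloor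
  rwa [← sub_div, sub_sub_sub_cancel_right, abs_div, abs_of_pos hδ, div_lt_one hδ] at this

theorem Complex.card_le_six_of_two_inner_le {ι : Type*} [Fintype ι] {w : ι → ℂ}
    (hw : ∀ i, w i ≠ 0) (h : Pairwise fun i j => 2 * ⟪w i, w j⟫_ℝ ≤ ‖w i‖ * ‖w j‖) :
    Fintype.card ι ≤ 6 := by
  by_contra! hcard
  have harg : ∀ i, -arg (w i) ∈ Set.Ico (-π) (-π + (6 : ℕ) * (π / 3)) := fun i =>
    ⟨by linarith [arg_le_pi (w i)], by push_cast; linarith [neg_pi_lt_arg (w i)]⟩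
  obtain ⟨i, j, hij, hclose⟩ := exists_ne_abs_sub_lt_of_card_lt hcard (by positivity) harg
  have hcos : 1 / 2 < Real.cos (arg (w i) - arg (w j)) := by
    rw [← cos_pi_div_three, ← cos_abs (arg _ - _)]
    refine cos_lt_cos_of_nonneg_of_le_pi (abs_nonneg _) (by linarith [pi_pos]) ?_
    rwa [neg_sub_neg, abs_sub_comm] at hclose
  have hpos : 0 < ‖w i‖ * ‖w j‖ := mul_pos (norm_pos_iff.2 (hw i)) (norm_pos_iff.2 (hw j))
  have hinner : 2 * ⟪w i, w j⟫_ℝ ≤ ‖w i‖ * ‖w j‖ := h hij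
  rw [inner_eq_norm_mul_norm_mul_cos_arg_sub] at hinner
  nlinarith

theorem card_le_six_of_two_inner_le {E : Type*} [NormedAddCommGroup E] [InnerProductSpace ℝ E]
    (hE : finrank ℝ E = 2) {ι : Type*} [Fintype ι] {v : ι → E} (hv : ∀ i, v i ≠ 0)
    (h : Pairwise fun i j => 2 * ⟪v i, v j⟫_ℝ ≤ ‖v i‖ * ‖v j‖) : Fintype.card ι ≤ 6 := by
  have : FiniteDimensional ℝ E := Module.finite_of_finrank_eq_succ hE
  let e : E ≃ₗᵢ[ℝ] ℂ :=
    (stdOrthonormalBasis ℝ E).equiv Complex.orthonormalBasisOneI (finCongr hE)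
  refine Complex.card_le_six_of_two_inner_le (w := e ∘ v) (fun i => by simpa using hv i)
    fun i j hij => ?_
  simpa only [Function.comp_apply, e.inner_map_map, e.norm_map] using h hij

theorem OrdinallyDense.card_le_seven {E : Type*} [NormedAddCommGroup E] [InnerProductSpace ℝ E]
    (hE : finrank ℝ E = 2) {N : ℕ} {x : Fin N → E} (hx : OrdinallyDense x) : N ≤ 7 := by
  obtain ⟨hinj, n₀, hn₀⟩ := hx
  have hcard := card_le_six_of_two_inner_le hE (v := fun n : {n // n ≠ n₀} => x n - x n₀)
    (fun n => sub_ne_zero.2 (hinj.ne n.2)) fun n m hnm => by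
      have hnm' : (n : Fin N) ≠ m := fun h => hnm (Subtype.ext h)
      refine two_inner_le_norm_mul_norm_of_norm_le_norm_sub ?_ ?_ <;>
        simp only [sub_sub_sub_cancel_right, ← dist_eq_norm]
      · exact hn₀ n n.2 n m n.2 m.2 hnm'
      · exact dist_comm (x n) (x m) ▸ hn₀ m m.2 m n m.2 n.2 hnm'.symm
  simp only [ne_eq, Fintype.card_subtype_compl, Fintype.card_fin, Fintype.card_unique] at hcard
  omega

theorem EuclideanSpace.dist_sq_eq_of_fin_two (p q : EuclideanSpace ℝ (Fin 2)) :
    dist p q ^ 2 = (p 0 - q 0) ^ 2 + (p 1 - q 1) ^ 2 := by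
  rw [EuclideanSpace.dist_eq, sq_sqrt (by positivity), Fin.sum_univ_two, Real.dist_eq,
    Real.dist_eq, sq_abs, sq_abs]

noncomputable def hexagonWithCenter : Fin 7 → EuclideanSpace ℝ (Fin 2) :=
  ![0, !₂[1, 0], !₂[1 / 2, √3 / 2], !₂[-1 / 2, √3 / 2], !₂[-1, 0], !₂[-1 / 2, -√3 / 2],
    !₂[1 / 2, -√3 / 2]]

theorem dist_hexagonWithCenter_zero_le (n : Fin 7) :
    dist (hexagonWithCenter n) (hexagonWithCenter 0) ≤ 1 := by
  rw [← sq_le_one_iff₀ dist_nonneg, EuclideanSpace.dist_sq_eq_of_fin_two]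
  fin_cases n <;>
    simp only [hexagonWithCenter, Fin.isValue, Fin.zero_eta, Fin.mk_one, Fin.reduceFinMk,
      Matrix.cons_val, Matrix.cons_val_zero, Matrix.cons_val_one, Matrix.cons_val_fin_one,
      PiLp.zero_apply] <;> ring_nf <;> norm_num

theorem one_le_dist_hexagonWithCenter {m k : Fin 7} (hmk : m ≠ k) :
    1 ≤ dist (hexagonWithCenter m) (hexagonWithCenter k) := by
  rw [← one_le_sq_iff₀ dist_nonneg, EuclideanSpace.dist_sq_eq_of_fin_two]
  fin_cases m <;> fin_cases k
  all_goals first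
    | exact absurd rfl hmk
    | simp only [hexagonWithCenter, Fin.isValue, Fin.zero_eta, Fin.mk_one, Fin.reduceFinMk,
        Matrix.cons_val, Matrix.cons_val_zero, Matrix.cons_val_one, Matrix.cons_val_fin_one,
        PiLp.zero_apply]
      ring_nf
      norm_num

theorem ordinallyDense_hexagonWithCenter : OrdinallyDense hexagonWithCenter := by
  refine ⟨fun m k hmk => by_contra fun hne => ?_, 0, fun n _ m k _ _ hmk =>
    (dist_hexagonWithCenter_zero_le n).trans (one_le_dist_hexagonWithCenter hmk)⟩
  have := one_le_dist_hexagonWithCenter hne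
  rw [hmk, dist_self] at this
  exact zero_lt_one.not_ge this

theorem ordinal_capacity_euclidean_plane :
    IsGreatest {N : ℕ | ∃ x : Fin N → EuclideanSpace ℝ (Fin 2), OrdinallyDense x} 7 :=
  ⟨⟨hexagonWithCenter, ordinallyDense_hexagonWithCenter⟩,
    fun _ ⟨_, hx⟩ => hx.card_le_seven finrank_euclideanSpace_fin⟩
end

section
/- The N-point ordinal spread of a space form S satisfies: if N ≤ K(S), then A_N(S) = C(N-1,2) + 1; in particular, for hyperbolic space H^d (which has infinite ordinal capacity), A_N(H^d) = C(N-1,2) + 1 for all N. -/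
/-- The `n`-th ordinal spread of a sorted index list `pairs`. -/
noncomputable def ordinalSpread {N : ℕ} (pairs : ℕ → Fin N × Fin N) (n : ℕ) : ℕ :=
  sInf {m | n ≤ ((Finset.range m).biUnion
    (fun r => ({(pairs r).1, (pairs r).2} : Finset (Fin N)))).card}

/-- `pairs` is a list of all unordered index pairs of `[N]` sorted by decreasing distance
of the corresponding points of `x`. -/
def IsSortedIndexList {S : Type*} [MetricSpace S] {N : ℕ} (x : Fin N → S)
    (pairs : ℕ → Fin N × Fin N) : Prop :=
  (∀ r < N.choose 2, (pairs r).1 ≠ (pairs r).2) ∧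
  (∀ i j : Fin N, i ≠ j →
    ∃ r < N.choose 2, ({(pairs r).1, (pairs r).2} : Finset (Fin N)) = {i, j}) ∧
  (∀ r < N.choose 2, ∀ s < N.choose 2, r ≠ s →
    ({(pairs r).1, (pairs r).2} : Finset (Fin N)) ≠ {(pairs s).1, (pairs s).2}) ∧
  (∀ r s, r ≤ s → s < N.choose 2 →
    dist (x (pairs s).1) (x (pairs s).2) ≤ dist (x (pairs r).1) (x (pairs r).2))

/-! Any `C(N-1,2) + 1` distinct pairs of `N` indices cover every index, since only `C(N-1,2)`
pairs avoid a given one; this bounds the spread from above. Conversely, if `n₀` is an ordinal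
centre of `x`, every pair through `n₀` is no longer than every pair avoiding it, so listing all
pairs avoiding `n₀` (sorted) before all pairs through `n₀` (sorted) gives a sorted list whose
first `C(N-1,2)` entries miss `n₀`. -/

open Finset

theorem Finset.exists_list_sorted_decreasing {α β : Type*} [LinearOrder β] (s : Finset α)
    (f : α → β) :
    ∃ l : List α, l.Nodup ∧ (∀ a, a ∈ l ↔ a ∈ s) ∧ l.Pairwise fun a b => f b ≤ f a := by
  classical
  refine ⟨s.toList.mergeSort fun a b => decide (f b ≤ f a),
    (List.mergeSort_perm _ _).nodup_iff.2 s.nodup_toList, by simp, ?_⟩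
  simpa using List.pairwise_mergeSort (le := fun a b => decide (f b ≤ f a))
    (by simpa using fun a b c hab hbc => hbc.trans hab) (by simpa using fun a b => le_total _ _)
    s.toList

theorem Prod.eq_of_pair_eq_pair {α : Type*} [LinearOrder α] {p q : α × α} (hp : p.1 < p.2)
    (hq : q.1 < q.2) (h : ({p.1, p.2} : Finset α) = {q.1, q.2}) : p = q := by
  have h' := congrArg (fun s : Finset α => (s : Set α)) h
  simp only [coe_pair, Set.pair_eq_pair_iff] at h'
  rcases h' with ⟨h₁, h₂⟩ | ⟨h₁, h₂⟩
  · exact Prod.ext h₁ h₂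
  · exact absurd (h₁ ▸ h₂ ▸ hp) hq.not_gt

section OrdinalCenter

variable {ι S : Type*} [PseudoMetricSpace S]

def IsOrdinalCenter (x : ι → S) (n₀ : ι) : Prop :=
  ∀ n, n ≠ n₀ → ∀ m k : ι, m ≠ n₀ → k ≠ n₀ → m ≠ k → dist (x n) (x n₀) ≤ dist (x m) (x k)

theorem IsOrdinalCenter.dist_le {x : ι → S} {n₀ : ι} (h : IsOrdinalCenter x n₀) {p q : ι × ι}
    (hp : p.1 ≠ p.2) (hp₀ : p.1 = n₀ ∨ p.2 = n₀) (hq : q.1 ≠ q.2) (hq₁ : q.1 ≠ n₀)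
    (hq₂ : q.2 ≠ n₀) : dist (x p.1) (x p.2) ≤ dist (x q.1) (x q.2) := by
  rcases hp₀ with hp₁ | hp₂
  · rw [hp₁, dist_comm]
    exact h _ (hp₁ ▸ hp.symm) _ _ hq₁ hq₂ hq
  · rw [hp₂]
    exact h _ (hp₂ ▸ hp) _ _ hq₁ hq₂ hq

end OrdinalCenter

section OrdinalSpread

variable {N : ℕ}

def coveredIndices (pairs : ℕ → Fin N × Fin N) (m : ℕ) : Finset (Fin N) :=
  (range m).biUnion fun r => {(pairs r).1, (pairs r).2}

theorem coveredIndices_mono (pairs : ℕ → Fin N × Fin N) : Monotone (coveredIndices pairs) :=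
  fun _ _ h => biUnion_subset_biUnion_of_subset_left _ (range_subset_range.2 h)

theorem ordinalSpread_le {pairs : ℕ → Fin N × Fin N} {n m : ℕ}
    (h : n ≤ #(coveredIndices pairs m)) : ordinalSpread pairs n ≤ m :=
  Nat.sInf_le h

theorem lt_ordinalSpread {pairs : ℕ → Fin N × Fin N} {n m k : ℕ}
    (hk : n ≤ #(coveredIndices pairs k)) (hm : #(coveredIndices pairs m) < n) :
    m < ordinalSpread pairs n := by
  by_contra! h
  have hspread : n ≤ #(coveredIndices pairs (ordinalSpread pairs n)) :=
    Nat.sInf_mem (s := {m | n ≤ #(coveredIndices pairs m)}) ⟨k, hk⟩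
  exact hm.not_ge (hspread.trans (card_le_card (coveredIndices_mono pairs h)))

theorem card_coveredIndices_lt {pairs : ℕ → Fin N × Fin N} {m : ℕ} {i : Fin N}
    (hi : i ∉ coveredIndices pairs m) : #(coveredIndices pairs m) < N := by
  simpa using card_lt_univ_of_notMem hi

end OrdinalSpread

section SortedIndexList

variable {N : ℕ} {S : Type*} [MetricSpace S]

theorem IsSortedIndexList.coveredIndices_eq_univ {x : Fin N → S} {pairs : ℕ → Fin N × Fin N}
    (h : IsSortedIndexList x pairs) (hN : 2 ≤ N) :
    coveredIndices pairs ((N - 1).choose 2 + 1) = univ := by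
  obtain ⟨hne, -, hdistinct, -⟩ := h
  have hlen : (N - 1).choose 2 + 1 ≤ N.choose 2 := by
    obtain ⟨n, rfl⟩ : ∃ n, N = n + 2 := ⟨N - 2, by omega⟩
    simp [Nat.choose_succ_succ', Nat.choose_one_right]
  refine eq_univ_of_forall fun i => ?_
  by_contra hi
  have hcard := card_le_card_of_injOn (fun r => ({(pairs r).1, (pairs r).2} : Finset (Fin N)))
    (s := range ((N - 1).choose 2 + 1)) (t := (univ.erase i).powersetCard 2)
    (fun r hr => by
      rw [mem_coe, mem_range] at hr
      rw [mem_coe, mem_powersetCard, subset_erase]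
      exact ⟨⟨subset_univ _, fun hi' => hi (mem_biUnion.2 ⟨r, mem_range.2 hr, hi'⟩)⟩,
        card_pair (hne r (by omega))⟩)
    (fun r hr s hs hrs => by
      rw [coe_range, Set.mem_Iio] at hr hs
      by_contra hne'
      exact hdistinct r (by omega) s (by omega) hne' hrs)
  simp at hcard

theorem IsSortedIndexList.le_card_coveredIndices {x : Fin N → S} {pairs : ℕ → Fin N × Fin N}
    (h : IsSortedIndexList x pairs) (hN : 2 ≤ N) :
    N ≤ #(coveredIndices pairs ((N - 1).choose 2 + 1)) := by
  rw [h.coveredIndices_eq_univ hN, card_univ, Fintype.card_fin]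

theorem IsSortedIndexList.ordinalSpread_le {x : Fin N → S} {pairs : ℕ → Fin N × Fin N}
    (h : IsSortedIndexList x pairs) (hN : 2 ≤ N) :
    ordinalSpread pairs N ≤ (N - 1).choose 2 + 1 :=
  _root_.ordinalSpread_le (h.le_card_coveredIndices hN)

theorem isSortedIndexList_getD {x : Fin N → S} {l : List (Fin N × Fin N)} (hnodup : l.Nodup)
    (hmem : ∀ p, p ∈ l ↔ p.1 < p.2)
    (hsorted : l.Pairwise fun p q => dist (x q.1) (x q.2) ≤ dist (x p.1) (x p.2))
    (p₀ : Fin N × Fin N) : IsSortedIndexList x (l.getD · p₀) := by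
  have hlen : l.length = N.choose 2 := by
    rw [← List.toFinset_card_of_nodup hnodup,
      show l.toFinset = {p ∈ (univ ×ˢ univ : Finset (Fin N × Fin N)) | p.1 < p.2} by
        ext; simp [hmem],
      card_product_filter_lt, card_univ, Fintype.card_fin]
  have hget : ∀ r (hr : r < N.choose 2), l.getD r p₀ = l[r] := fun r hr =>
    List.getD_eq_getElem _ _ (hlen ▸ hr)
  have hlt : ∀ r (hr : r < l.length), l[r].1 < l[r].2 := fun r hr => (hmem _).1 (l.getElem_mem hr)
  refine ⟨fun r hr => ?_, fun i j hij => ?_, fun r hr s hs hrs heq => ?_, fun r s hrs hs => ?_⟩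
  · simpa only [hget r hr] using (hlt r _).ne
  · obtain ⟨p, hp, hpij⟩ :
        ∃ p : Fin N × Fin N, p.1 < p.2 ∧ ({p.1, p.2} : Finset (Fin N)) = {i, j} := by
      rcases hij.lt_or_gt with h | h
      · exact ⟨(i, j), h, rfl⟩
      · exact ⟨(j, i), h, pair_comm j i⟩
    obtain ⟨r, hr, rfl⟩ := List.getElem_of_mem ((hmem p).2 hp)
    exact ⟨r, hlen ▸ hr, by simpa only [hget r (hlen ▸ hr)]⟩
  · simp only [hget r hr, hget s hs] at heq
    exact hrs (hnodup.getElem_inj_iff.1 (Prod.eq_of_pair_eq_pair (hlt r _) (hlt s _) heq))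
  · simp only [hget r (hrs.trans_lt hs), hget s hs]
    rcases hrs.lt_or_eq with hrs | rfl
    · exact List.pairwise_iff_getElem.1 hsorted r s _ _ hrs
    · exact le_rfl

theorem IsOrdinalCenter.exists_isSortedIndexList {x : Fin N → S} {n₀ : Fin N}
    (h : IsOrdinalCenter x n₀) :
    ∃ pairs, IsSortedIndexList x pairs ∧ n₀ ∉ coveredIndices pairs ((N - 1).choose 2) := by
  set A : Finset (Fin N × Fin N) := {p ∈ univ.erase n₀ ×ˢ univ.erase n₀ | p.1 < p.2}
  set B : Finset (Fin N × Fin N) := {p ∈ univ ×ˢ univ | p.1 < p.2 ∧ (p.1 = n₀ ∨ p.2 = n₀)}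
  obtain ⟨lA, hlA, hmemA, hsortA⟩ := A.exists_list_sorted_decreasing fun p => dist (x p.1) (x p.2)
  obtain ⟨lB, hlB, hmemB, hsortB⟩ := B.exists_list_sorted_decreasing fun p => dist (x p.1) (x p.2)
  replace hmemA (p : Fin N × Fin N) : p ∈ lA ↔ (p.1 ≠ n₀ ∧ p.2 ≠ n₀) ∧ p.1 < p.2 := by
    simp [hmemA, A]
  replace hmemB (p : Fin N × Fin N) : p ∈ lB ↔ p.1 < p.2 ∧ (p.1 = n₀ ∨ p.2 = n₀) := by
    simp [hmemB, B]
  have hlenA : lA.length = (N - 1).choose 2 := by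
    rw [← List.toFinset_card_of_nodup hlA, show lA.toFinset = A by ext; simp [hmemA, A],
      card_product_filter_lt, card_erase_of_mem (mem_univ _), card_univ, Fintype.card_fin]
  refine ⟨((lA ++ lB).getD · (n₀, n₀)), isSortedIndexList_getD ?_ ?_ ?_ _, ?_⟩
  · refine List.nodup_append.2 ⟨hlA, hlB, ?_⟩
    rintro p hp _ hq rfl
    rw [hmemA] at hp
    rw [hmemB] at hq
    tauto
  · intro p
    rw [List.mem_append, hmemA, hmemB]
    tauto
  · refine List.pairwise_append.2 ⟨hsortA, hsortB, fun p hp q hq => ?_⟩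
    rw [hmemA] at hp
    rw [hmemB] at hq
    exact h.dist_le hq.1.ne hq.2 hp.2.ne hp.1.1 hp.1.2
  · simp only [coveredIndices, mem_biUnion, mem_range, not_exists, not_and]
    intro r hr
    rw [List.getD_append _ _ _ _ (hlenA ▸ hr), List.getD_eq_getElem _ _ (hlenA ▸ hr)]
    have hmem := (hmemA _).1 (List.getElem_mem (hlenA ▸ hr))
    simp [hmem.1.1.symm, hmem.1.2.symm]

end SortedIndexList

/-- If `N` is at most the ordinal capacity of `S` (i.e. there is an ordinally dense set of
`N` points in `S`), then the `N`-point ordinal spread of `S` equals `C(N-1,2) + 1`. -/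
theorem n_point_ordinal_spread_at_capacity {S : Type*} [MetricSpace S]
    (N : ℕ) (hN : 2 ≤ N)
    (hcap : ∃ x : Fin N → S, OrdinallyDense x) :
    IsGreatest {a : ℕ | ∃ x : Fin N → S, ∃ pairs : ℕ → Fin N × Fin N,
        IsSortedIndexList x pairs ∧ a = ordinalSpread pairs N}
      ((N - 1).choose 2 + 1) := by
  refine ⟨?_, fun a ⟨x, pairs, hsorted, ha⟩ => ha ▸ hsorted.ordinalSpread_le hN⟩
  obtain ⟨x, -, n₀, hcenter⟩ := hcap
  obtain ⟨pairs, hsorted, hn₀⟩ := IsOrdinalCenter.exists_isSortedIndexList hcenter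
  exact ⟨x, pairs, hsorted, le_antisymm
    (lt_ordinalSpread (hsorted.le_card_coveredIndices hN) (card_coveredIndices_lt hn₀))
    (hsorted.ordinalSpread_le hN)⟩
end
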